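/- Define inductively, for k ∈ ℕ: an x-monotone polyomino P admits a vertical decomposition tree of depth k if P is orthogonally convex, or k ≥ 1 and there exists c ∈ ℤ with P≤c and P>c both nonempty such that both P≤c and P>c admit vertical decomposition trees of depth k−1. Then every x-monotone polyomino P admits a vertical decomposition tree of depth ⌈log₂(d(P)+1)⌉, where d(P) is the decomposition number of P. -/

import Mathlib

/-!
Take cut positions `C` decomposing `P` with `#C < 2 ^ (k + 1)` and cut first at the median
position `c ∈ C`. The positions left and right of `c` decompose the two pieces and number fewer
than `2 ^ k` each, so induction on `k` gives trees of depth `k` for both pieces; if one piece is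
empty, the other is `P` itself and already has a tree of depth `k`. The decomposition number is
attained because, `P` being x-monotone, cutting between all its columns leaves single columns,
which are orthogonally convex.
-/

/-- Two grid points are adjacent if they are at Euclidean distance 1. -/
def Adj (p q : ℤ × ℤ) : Prop := |p.1 - q.1| + |p.2 - q.2| = 1

/-- A set of grid points induces a connected grid graph. -/
def GridConnected (S : Set (ℤ × ℤ)) : Prop :=
  ∀ p ∈ S, ∀ q ∈ S,
    Relation.ReflTransGen (fun a b => a ∈ S ∧ b ∈ S ∧ Adj a b) p q

/-- A polyomino: a finite nonempty set of grid points with connected grid graph. -/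
def IsPolyomino (P : Finset (ℤ × ℤ)) : Prop :=
  P.Nonempty ∧ GridConnected ↑P

/-- x-monotone (column convex). -/
def ColumnConvex (S : Set (ℤ × ℤ)) : Prop :=
  ∀ x y₁ y₂ y : ℤ, (x, y₁) ∈ S → (x, y₂) ∈ S → y₁ ≤ y → y ≤ y₂ → (x, y) ∈ S

/-- y-monotone (row convex). -/
def RowConvex (S : Set (ℤ × ℤ)) : Prop :=
  ∀ y x₁ x₂ x : ℤ, (x₁, y) ∈ S → (x₂, y) ∈ S → x₁ ≤ x → x ≤ x₂ → (x, y) ∈ S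

/-- Orthogonally convex. -/
def OrthoConvex (S : Set (ℤ × ℤ)) : Prop := ColumnConvex S ∧ RowConvex S

/-- Simple (hole-free): the complement induces a connected grid graph. -/
def SimplePoly (P : Finset (ℤ × ℤ)) : Prop :=
  GridConnected ((↑P : Set (ℤ × ℤ))ᶜ)

/-- Left piece of the vertical cut at `c`. -/
def PLe (P : Finset (ℤ × ℤ)) (c : ℤ) : Finset (ℤ × ℤ) :=
  P.filter (fun p => p.1 ≤ c)

/-- Right piece of the vertical cut at `c`. -/
def PGt (P : Finset (ℤ × ℤ)) (c : ℤ) : Finset (ℤ × ℤ) :=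
  P.filter (fun p => c < p.1)

/-- Vertical straight 2-cut of `P` at position `c` into left piece `P₁` and right
piece `P₂`. -/
def IsVCut (P P₁ P₂ : Finset (ℤ × ℤ)) (c : ℤ) : Prop :=
  P₁ ∪ P₂ = P ∧ Disjoint P₁ P₂ ∧ P₁.Nonempty ∧ P₂.Nonempty ∧
  GridConnected ↑P₁ ∧ GridConnected ↑P₂ ∧
  ∀ p ∈ P₁, ∀ q ∈ P₂, Adj p q → p.1 = c ∧ q.1 = c + 1 ∧ p.2 = q.2

/-- Valid vertical straight 2-cut: the pieces can be pulled apart horizontally. -/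
def ValidVCut (P P₁ P₂ : Finset (ℤ × ℤ)) (c : ℤ) : Prop :=
  IsVCut P P₁ P₂ c ∧ ∀ k : ℤ, 1 ≤ k → ∀ p ∈ P₂, (p.1 + k, p.2) ∉ P₁

/-- Horizontal straight 2-cut of `P` at position `c` into bottom piece `P₁` and
top piece `P₂` (coordinates exchanged). -/
def IsHCut (P P₁ P₂ : Finset (ℤ × ℤ)) (c : ℤ) : Prop :=
  P₁ ∪ P₂ = P ∧ Disjoint P₁ P₂ ∧ P₁.Nonempty ∧ P₂.Nonempty ∧
  GridConnected ↑P₁ ∧ GridConnected ↑P₂ ∧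
  ∀ p ∈ P₁, ∀ q ∈ P₂, Adj p q → p.2 = c ∧ q.2 = c + 1 ∧ p.1 = q.1

/-- Valid horizontal straight 2-cut: the pieces can be pulled apart vertically. -/
def ValidHCut (P P₁ P₂ : Finset (ℤ × ℤ)) (c : ℤ) : Prop :=
  IsHCut P P₁ P₂ c ∧ ∀ k : ℤ, 1 ≤ k → ∀ p ∈ P₂, (p.1, p.2 + k) ∉ P₁

/-- The part of the decomposition of `P` by the vertical cut positions `C`
that contains the point `p`. -/
def CutPart (P : Finset (ℤ × ℤ)) (C : Finset ℤ) (p : ℤ × ℤ) : Finset (ℤ × ℤ) :=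
  P.filter (fun q => ∀ c ∈ C, (q.1 ≤ c ↔ p.1 ≤ c))

/-- The vertical cut positions `C` decompose `P` into orthogonally convex parts. -/
def Decomposes (P : Finset (ℤ × ℤ)) (C : Finset ℤ) : Prop :=
  ∀ p ∈ P, OrthoConvex ↑(CutPart P C p)

/-- The decomposition number `d(P)`: the minimum number of vertical cut positions
decomposing `P` into orthogonally convex parts. -/
noncomputable def decompNumber (P : Finset (ℤ × ℤ)) : ℕ :=
  sInf {k | ∃ C : Finset ℤ, C.card = k ∧ Decomposes P C}

/-- `(a, b, y₀)` is a minimum of the upper envelope of `P`. -/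
def UpperEnvMin (P : Set (ℤ × ℤ)) (a b y₀ : ℤ) : Prop :=
  a + 2 ≤ b ∧ (∀ x : ℤ, a ≤ x → x ≤ b → (x, y₀) ∈ P) ∧
  (a, y₀ + 1) ∈ P ∧ (b, y₀ + 1) ∈ P ∧ ∀ x : ℤ, a < x → x < b → (x, y₀ + 1) ∉ P

/-- `(a, b, y₀)` is a maximum of the lower envelope of `P`. -/
def LowerEnvMax (P : Set (ℤ × ℤ)) (a b y₀ : ℤ) : Prop :=
  a + 2 ≤ b ∧ (∀ x : ℤ, a ≤ x → x ≤ b → (x, y₀) ∈ P) ∧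
  (a, y₀ - 1) ∈ P ∧ (b, y₀ - 1) ∈ P ∧ ∀ x : ℤ, a < x → x < b → (x, y₀ - 1) ∉ P

/-- The four cells of the 2×2 square with lower-left corner `s`. -/
def SquareCells (s : ℤ × ℤ) : Finset (ℤ × ℤ) :=
  {s, (s.1 + 1, s.2), (s.1, s.2 + 1), (s.1 + 1, s.2 + 1)}

/-- A 2×2 square (given by its lower-left corner `s`) is a reflex witness of `P`
if it contains exactly three points of `P`. -/
def ReflexWitness (P : Finset (ℤ × ℤ)) (s : ℤ × ℤ) : Prop :=
  (SquareCells s ∩ P).card = 3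

/-- The number of reflex witnesses of `P`. -/
noncomputable def wRef (P : Finset (ℤ × ℤ)) : ℕ :=
  Set.ncard {s : ℤ × ℤ | ReflexWitness P s}

/-- A tile `t` is locally reflex: it is the corner tile of some reflex witness,
i.e. the square cell opposite to `t` is the one missing from `P`. -/
def LocallyReflex (P : Finset (ℤ × ℤ)) (t : ℤ × ℤ) : Prop :=
  ∃ s : ℤ × ℤ, ReflexWitness P s ∧ t ∈ SquareCells s ∧
    (2 * s.1 + 1 - t.1, 2 * s.2 + 1 - t.2) ∉ P

/-- The number of locally reflex tiles of `P`. -/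
noncomputable def rRef (P : Finset (ℤ × ℤ)) : ℕ :=
  Set.ncard {t : ℤ × ℤ | LocallyReflex P t}

/-- A tile `t` is locally convex: some 2×2 square contains `t` and no other
point of `P`. -/
def LocallyConvex (P : Finset (ℤ × ℤ)) (t : ℤ × ℤ) : Prop :=
  ∃ s : ℤ × ℤ, t ∈ SquareCells s ∧ SquareCells s ∩ P = {t}

/-- A straight 2-cut `(P₁, P₂)` is along a locally reflex tile of `P`. -/
def AlongReflex (P P₁ P₂ : Finset (ℤ × ℤ)) : Prop :=
  ∃ s : ℤ × ℤ, ReflexWitness P s ∧ (SquareCells s ∩ P₁).Nonempty ∧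
    (SquareCells s ∩ P₂).Nonempty

/-- A valid (not necessarily straight) 2-cut of `P` into `P₁` and `P₂`. -/
def ValidCut (P P₁ P₂ : Finset (ℤ × ℤ)) : Prop :=
  P₁ ∪ P₂ = P ∧ Disjoint P₁ P₂ ∧ P₁.Nonempty ∧ P₂.Nonempty ∧
  GridConnected ↑P₁ ∧ GridConnected ↑P₂ ∧
  ∃ v ∈ ({(1, 0), (-1, 0), (0, 1), (0, -1)} : Set (ℤ × ℤ)),
    ∀ k : ℤ, 1 ≤ k → ∀ p ∈ P₂, (p.1 + k * v.1, p.2 + k * v.2) ∉ P₁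

/-- A polyomino is 2-cuttable: it is orthogonally convex, or some valid 2-cut
splits it into two 2-cuttable polyominoes. -/
inductive TwoCuttable : Finset (ℤ × ℤ) → Prop
  | convex (P : Finset (ℤ × ℤ)) : IsPolyomino P → OrthoConvex ↑P → TwoCuttable P
  | cut (P P₁ P₂ : Finset (ℤ × ℤ)) : ValidCut P P₁ P₂ →
      TwoCuttable P₁ → TwoCuttable P₂ → TwoCuttable P

/-- A polyomino is straight 2-cuttable: it is orthogonally convex, or some valid
vertical or horizontal straight 2-cut splits it into two straight 2-cuttable
polyominoes. -/
inductive Straight2Cuttable : Finset (ℤ × ℤ) → Prop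
  | convex (P : Finset (ℤ × ℤ)) : IsPolyomino P → OrthoConvex ↑P → Straight2Cuttable P
  | vcut (P P₁ P₂ : Finset (ℤ × ℤ)) (c : ℤ) : ValidVCut P P₁ P₂ c →
      Straight2Cuttable P₁ → Straight2Cuttable P₂ → Straight2Cuttable P
  | hcut (P P₁ P₂ : Finset (ℤ × ℤ)) (c : ℤ) : ValidHCut P P₁ P₂ c →
      Straight2Cuttable P₁ → Straight2Cuttable P₂ → Straight2Cuttable P

/-- `P` admits a vertical decomposition tree of depth `k`: `P` is orthogonally
convex, or `k ≥ 1` and some vertical cut (with both pieces nonempty) splits `P`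
into pieces each admitting a vertical decomposition tree of depth `k - 1`. -/
def AdmitsTree : ℕ → Finset (ℤ × ℤ) → Prop
  | 0, P => OrthoConvex ↑P
  | k + 1, P => OrthoConvex ↑P ∨
      ∃ c : ℤ, (PLe P c).Nonempty ∧ (PGt P c).Nonempty ∧
        AdmitsTree k (PLe P c) ∧ AdmitsTree k (PGt P c)

open Finset

theorem Finset.exists_card_filter_lt_eq {α : Type*} [LinearOrder α] (s : Finset α) {n : ℕ}
    (hn : n < #s) : ∃ c ∈ s, #{x ∈ s | x < c} = n := by
  induction s using Finset.induction_on_max generalizing n with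
  | empty => simp at hn
  | insert a t hlt ih =>
    have ha : a ∉ t := fun h => lt_irrefl a (hlt a h)
    rw [card_insert_of_notMem ha] at hn
    rcases (Nat.lt_succ_iff.mp hn).lt_or_eq with hn | rfl
    · obtain ⟨c, hc, hcard⟩ := ih hn
      refine ⟨c, mem_insert_of_mem hc, ?_⟩
      rwa [filter_insert, if_neg (hlt c hc).not_gt]
    · refine ⟨a, mem_insert_self a t, ?_⟩
      rw [filter_insert, if_neg (lt_irrefl a), filter_true_of_mem hlt]

theorem Finset.card_filter_lt_add_card_filter_gt {α : Type*} [LinearOrder α] {s : Finset α}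
    {c : α} (hc : c ∈ s) : #{x ∈ s | x < c} + #{x ∈ s | c < x} + 1 = #s := by
  have hge : {x ∈ s | ¬ x < c} = insert c {x ∈ s | c < x} := by
    ext x; simp only [mem_filter, mem_insert, not_lt]; grind
  rw [← card_filter_add_card_filter_not (s := s) (· < c), hge, card_insert_of_notMem (by simp)]
  omega

theorem admitsTree_of_orthoConvex {P : Finset (ℤ × ℤ)} (h : OrthoConvex ↑P) :
    ∀ k, AdmitsTree k P
  | 0 => h
  | _ + 1 => Or.inl h

theorem AdmitsTree.succ : ∀ {k : ℕ} {P : Finset (ℤ × ℤ)}, AdmitsTree k P → AdmitsTree (k + 1) P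
  | 0, _, h => Or.inl h
  | _ + 1, _, Or.inl h => Or.inl h
  | _ + 1, _, Or.inr ⟨c, hle, hgt, hL, hR⟩ => Or.inr ⟨c, hle, hgt, hL.succ, hR.succ⟩

theorem pLe_eq_self {P : Finset (ℤ × ℤ)} {c : ℤ} (h : PGt P c = ∅) : PLe P c = P := by
  rw [PGt, filter_eq_empty_iff] at h
  exact filter_true_of_mem fun p hp => not_lt.mp (h hp)

theorem pGt_eq_self {P : Finset (ℤ × ℤ)} {c : ℤ} (h : PLe P c = ∅) : PGt P c = P := by
  rw [PLe, filter_eq_empty_iff] at h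
  exact filter_true_of_mem fun p hp => not_le.mp (h hp)

theorem mem_cutPart {P : Finset (ℤ × ℤ)} {C : Finset ℤ} {p q : ℤ × ℤ} :
    q ∈ CutPart P C p ↔ q ∈ P ∧ ∀ c ∈ C, (q.1 ≤ c ↔ p.1 ≤ c) :=
  mem_filter

theorem Decomposes.orthoConvex_of_empty {P : Finset (ℤ × ℤ)} (h : Decomposes P ∅) :
    OrthoConvex ↑P := by
  obtain rfl | ⟨p, hp⟩ := P.eq_empty_or_nonempty
  · simp [OrthoConvex, ColumnConvex, RowConvex]
  · simpa [CutPart] using h p hp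

theorem Decomposes.pLe {P : Finset (ℤ × ℤ)} {C : Finset ℤ} {c : ℤ} (h : Decomposes P C)
    (hc : c ∈ C) : Decomposes (PLe P c) {x ∈ C | x < c} := by
  intro p hp
  rw [PLe, mem_filter] at hp
  convert h p hp.1 using 2
  ext q
  simp only [mem_cutPart, PLe, mem_filter]
  constructor
  · rintro ⟨⟨hq, hqc⟩, hcut⟩
    refine ⟨hq, fun c' hc' => ?_⟩
    by_cases hlt : c' < c
    · exact hcut c' ⟨hc', hlt⟩
    · omega
  · rintro ⟨hq, hcut⟩
    exact ⟨⟨hq, (hcut c hc).mpr hp.2⟩, fun c' hc' => hcut c' hc'.1⟩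

theorem Decomposes.pGt {P : Finset (ℤ × ℤ)} {C : Finset ℤ} {c : ℤ} (h : Decomposes P C)
    (hc : c ∈ C) : Decomposes (PGt P c) {x ∈ C | c < x} := by
  intro p hp
  rw [PGt, mem_filter] at hp
  convert h p hp.1 using 2
  ext q
  simp only [mem_cutPart, PGt, mem_filter]
  constructor
  · rintro ⟨⟨hq, hqc⟩, hcut⟩
    refine ⟨hq, fun c' hc' => ?_⟩
    by_cases hlt : c < c'
    · exact hcut c' ⟨hc', hlt⟩
    · omega
  · rintro ⟨hq, hcut⟩
    have := hcut c hc
    exact ⟨⟨hq, by omega⟩, fun c' hc' => hcut c' hc'.1⟩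

theorem admitsTree_of_decomposes :
    ∀ {k : ℕ} {P : Finset (ℤ × ℤ)} {C : Finset ℤ}, #C < 2 ^ k → Decomposes P C → AdmitsTree k P
  | 0, P, C, hC, h => by
    rw [pow_zero, Nat.lt_one_iff, card_eq_zero] at hC
    exact (hC ▸ h).orthoConvex_of_empty
  | k + 1, P, C, hC, h => by
    obtain rfl | hne := C.eq_empty_or_nonempty
    · exact admitsTree_of_orthoConvex h.orthoConvex_of_empty _
    obtain ⟨c, hc, hlow⟩ := C.exists_card_filter_lt_eq (n := (#C - 1) / 2)
      (by have := hne.card_pos; omega)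
    have hsplit := card_filter_lt_add_card_filter_gt hc
    have hpow : 2 ^ (k + 1) = 2 * 2 ^ k := by ring
    have hL : AdmitsTree k (PLe P c) := admitsTree_of_decomposes (by omega) (h.pLe hc)
    have hR : AdmitsTree k (PGt P c) := admitsTree_of_decomposes (by omega) (h.pGt hc)
    obtain hle | hle := (PLe P c).eq_empty_or_nonempty
    · exact (pGt_eq_self hle ▸ hR).succ
    obtain hgt | hgt := (PGt P c).eq_empty_or_nonempty
    · exact (pLe_eq_self hgt ▸ hL).succ
    exact Or.inr ⟨c, hle, hgt, hL, hR⟩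

theorem decomposes_image_fst {P : Finset (ℤ × ℤ)} (hmono : ColumnConvex ↑P) :
    Decomposes P (P.image Prod.fst) := by
  intro p hp
  have hcol : ∀ q ∈ CutPart P (P.image Prod.fst) p, q.1 = p.1 := by
    intro q hq
    obtain ⟨hqP, hcut⟩ := mem_cutPart.mp hq
    have h1 := hcut q.1 (mem_image_of_mem Prod.fst hqP)
    have h2 := hcut p.1 (mem_image_of_mem Prod.fst hp)
    omega
  constructor
  · intro x y₁ y₂ y h₁ h₂ hy₁ hy₂
    simp only [mem_coe, mem_cutPart] at h₁ h₂ ⊢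
    exact ⟨hmono x y₁ y₂ y h₁.1 h₂.1 hy₁ hy₂, h₁.2⟩
  · intro y x₁ x₂ x h₁ h₂ hx₁ hx₂
    have e₁ := hcol (x₁, y) h₁
    have e₂ := hcol (x₂, y) h₂
    obtain rfl : x = x₁ := by simp only at e₁ e₂; omega
    exact h₁

theorem stmt5_general (P : Finset (ℤ × ℤ)) (hmono : ColumnConvex ↑P) :
    AdmitsTree (Nat.clog 2 (decompNumber P + 1)) P := by
  have hfinite : {k | ∃ C : Finset ℤ, #C = k ∧ Decomposes P C}.Nonempty :=
    ⟨_, _, rfl, decomposes_image_fst hmono⟩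
  obtain ⟨C, hC, hdec⟩ := Nat.sInf_mem hfinite
  refine admitsTree_of_decomposes ?_ hdec
  rw [hC]
  exact Nat.le_pow_clog one_lt_two _

/-- Every x-monotone polyomino admits a vertical decomposition tree
of depth `⌈log₂(d(P) + 1)⌉`. -/
theorem stmt5 (P : Finset (ℤ × ℤ)) (hP : IsPolyomino P) (hmono : ColumnConvex ↑P) :
    AdmitsTree (Nat.clog 2 (decompNumber P + 1)) P :=
  stmt5_general P hmono
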